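/- arXiv:1505.01792 — 2 statements merged into one kernel-verified Lean document; each statement's English description precedes it below -/
import Mathlib

section
/- Let (X_j, d_j) be a sequence of precompact length metric spaces with precompact boundary ∂X_j = X̄_j \ X_j. Suppose there is a decreasing sequence δ_i → 0 such that for each i the inner regions X_j^{δ_i} are nonempty and the sequence of closures (cl(X_j^{δ_i}), d_j) converges in Gromov–Hausdorff sense as j → ∞ to a compact metric space, and suppose the boundaries (∂X_j, d_j) converge in Gromov–Hausdorff sense to a compact metric space. Then a subsequence of the completions (X̄_j, d_j) converges in Gromov–Hausdorff sense to a compact metric space. -/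
open Metric Set Filter GromovHausdorff
open UniformSpace (Completion)

noncomputable section

/-- The boundary of a metric space: its metric completion minus (the image of) the space. -/
def mBoundary (X : Type u) [MetricSpace X] : Set (Completion X) :=
  (Set.range ((↑) : X → Completion X))ᶜ

/-- The δ-inner region of a metric space. -/
def innerRegion (X : Type u) [MetricSpace X] (δ : ℝ) : Set X :=
  {x : X | δ < infDist (↑x : Completion X) (mBoundary X)}

/-- A metric space is a length space: every pair of points admits approximate midpoints. -/
def IsLengthSpace (X : Type u) [MetricSpace X] : Prop :=
  ∀ x y : X, ∀ ε > (0 : ℝ), ∃ z : X, dist x z ≤ dist x y / 2 + ε ∧ dist z y ≤ dist x y / 2 + ε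

/-- The point of Gromov–Hausdorff space determined by a nonempty compact subset. -/
def setGH {Z : Type u} [MetricSpace Z] (S : Set Z) (hc : IsCompact S) (hn : S.Nonempty) :
    GHSpace :=
  @toGHSpace S _ (isCompact_iff_compactSpace.mp hc) hn.to_subtype

/-!
By Gromov's criterion it suffices to bound the diameters and the covering numbers of the
completions `X̄_j` uniformly in `j`. Every point of `X̄_j` lies in `cl(X_j^δ)` or within `δ'` of
`∂X_j` (for `δ < δ'`), so both quantities are controlled by those of `cl(X_j^δ)` and of `∂X_j`,
and these are in turn controlled by those of the GH limits, since GH-closeness transfers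
diameters and covering numbers up to a small change of the radius. For the diameter one also
needs `cl(X_j^δ)` to come close to `∂X_j`: as `X_j` is a length space, a discrete intermediate
value argument along approximate midpoints gives a point of `X_j^δ` within `δ'` of `∂X_j`.
-/

open scoped NNReal ENNReal Topology

namespace Metric

variable {X : Type*} [PseudoEMetricSpace X] {ε : ℝ≥0} {s t N : Set X}

lemma IsCover.thickening (h : IsCover ε s N) (d : ℝ≥0) :
    IsCover (d + ε) (thickening d s) N := by
  intro x hx
  obtain ⟨z, hz, hxz⟩ := (mem_thickening_iff_exists_edist_lt s x).1 hx
  obtain ⟨y, hy, hzy⟩ := h hz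
  refine ⟨y, hy, ?_⟩
  change edist x y ≤ _
  change edist z y ≤ _ at hzy
  calc edist x y ≤ edist x z + edist z y := edist_triangle _ _ _
    _ ≤ d + ε := by
      gcongr
      simpa using hxz.le

lemma externalCoveringNumber_thickening_le (d : ℝ≥0) :
    externalCoveringNumber (d + ε) (thickening d s) ≤ externalCoveringNumber ε s := by
  simp only [externalCoveringNumber, le_iInf_iff]
  exact fun N hN => (hN.thickening d).externalCoveringNumber_le_encard

lemma externalCoveringNumber_union_le :
    externalCoveringNumber ε (s ∪ t) ≤ externalCoveringNumber ε s + externalCoveringNumber ε t :=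
  ENat.le_iInf₂_add_iInf₂ fun _ hM _ hN =>
    (IsCover.externalCoveringNumber_le_encard (SetRel.IsCover.union hM hN)).trans
      (encard_union_le _ _)

lemma diam_le_of_subset_union_thickening {Z : Type*} [PseudoMetricSpace Z]
    {s A B : Set Z} {p w : Z} {d : ℝ} (hA : Bornology.IsBounded A) (hB : Bornology.IsBounded B)
    (hp : p ∈ A) (hw : w ∈ B) (hd : 0 ≤ d) (hs : s ⊆ A ∪ thickening d B) :
    diam s ≤ diam A + dist p w + diam B + 2 * d := by
  have hsub : s ⊆ cthickening d (A ∪ B) :=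
    hs.trans <| union_subset
      ((self_subset_cthickening A).trans (cthickening_subset_of_subset d subset_union_left))
      ((thickening_subset_cthickening d B).trans
        (cthickening_subset_of_subset d subset_union_right))
  calc diam s ≤ diam (cthickening d (A ∪ B)) := diam_mono hsub (hA.union hB).cthickening
    _ ≤ diam (A ∪ B) + 2 * d := diam_cthickening_le _ hd
    _ ≤ diam A + dist p w + diam B + 2 * d := by gcongr; exact diam_union hp hw

end Metric

lemma IsCompact.coveringNumber_ne_top {Z : Type*} [PseudoEMetricSpace Z] {s : Set Z}
    (hs : IsCompact s) {ε : ℝ≥0} (hε : ε ≠ 0) : coveringNumber ε s ≠ ⊤ := by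
  obtain ⟨N, hNs, hNfin, hN⟩ := exists_finite_isCover_of_isCompact hε hs
  exact ne_top_of_le_ne_top hNfin.encard_lt_top.ne (hN.coveringNumber_le_encard hNs)

lemma ENat.exists_forall_le_of_eventually_le {f : ℕ → ℕ∞} (hf : ∀ n, f n ≠ ⊤) {N : ℕ}
    (h : ∀ᶠ n in atTop, f n ≤ N) : ∃ M : ℕ, ∀ n, f n ≤ M := by
  obtain ⟨J, hJ⟩ := eventually_atTop.1 h
  refine ⟨N + ∑ j ∈ Finset.range J, (f j).toNat, fun n => ?_⟩
  rcases lt_or_ge n J with hn | hn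
  · rw [← ENat.natCast_toNat (hf n)]
    exact_mod_cast (Finset.single_le_sum (f := fun j => (f j).toNat) (fun j _ => Nat.zero_le _)
      (Finset.mem_range.2 hn)).trans (Nat.le_add_left _ N)
  · exact (hJ n hn).trans (by exact_mod_cast Nat.le_add_right _ _)

namespace GromovHausdorff

lemma exists_isometry_range_subset_thickening (p q : GHSpace) {d : ℝ} (hd : dist p q < d) :
    ∃ Φ : p.Rep → lp (fun _ : ℕ => ℝ) ∞, ∃ Ψ : q.Rep → lp (fun _ : ℕ => ℝ) ∞,
      Isometry Φ ∧ Isometry Ψ ∧ range Φ ⊆ thickening d (range Ψ) := by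
  obtain ⟨Φ, Ψ, hΦ, hΨ, hH⟩ := ghDist_eq_hausdorffDist p.Rep q.Rep
  refine ⟨Φ, Ψ, hΦ, hΨ, fun x hx => ?_⟩
  have hfin : hausdorffEDist (range Φ) (range Ψ) ≠ ⊤ :=
    hausdorffEDist_ne_top_of_nonempty_of_bounded (range_nonempty Φ) (range_nonempty Ψ)
      (isCompact_range hΦ.continuous).isBounded (isCompact_range hΨ.continuous).isBounded
  rw [mem_thickening_iff_infDist_lt (range_nonempty Ψ)]
  calc infDist x (range Ψ) ≤ hausdorffDist (range Φ) (range Ψ) :=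
        infDist_le_hausdorffDist_of_mem hx hfin
    _ < d := by rwa [← hH, ← dist_ghDist]

lemma diam_rep_le (p q : GHSpace) {d : ℝ} (hd : dist p q < d) :
    diam (univ : Set p.Rep) ≤ diam (univ : Set q.Rep) + 2 * d := by
  obtain ⟨Φ, Ψ, hΦ, hΨ, hsub⟩ := exists_isometry_range_subset_thickening p q hd
  have hd0 : 0 ≤ d := dist_nonneg.trans hd.le
  rw [← hΦ.diam_range, ← hΨ.diam_range]
  exact (diam_mono hsub ((isCompact_range hΨ.continuous).isBounded.thickening)).trans
    (diam_thickening_le _ hd0)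

lemma coveringNumber_rep_le (p q : GHSpace) {d : ℝ≥0} (hd : dist p q < d) (ε : ℝ≥0) :
    coveringNumber (2 * (d + ε)) (univ : Set p.Rep) ≤ coveringNumber ε (univ : Set q.Rep) := by
  obtain ⟨Φ, Ψ, hΦ, hΨ, hsub⟩ := exists_isometry_range_subset_thickening p q hd
  rw [← hΦ.coveringNumber_image, ← hΨ.coveringNumber_image, image_univ, image_univ]
  calc coveringNumber (2 * (d + ε)) (range Φ)
      ≤ externalCoveringNumber (d + ε) (range Φ) :=
        coveringNumber_two_mul_le_externalCoveringNumber _ _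
    _ ≤ externalCoveringNumber (d + ε) (thickening d (range Ψ)) :=
        externalCoveringNumber_mono_set hsub
    _ ≤ externalCoveringNumber ε (range Ψ) := externalCoveringNumber_thickening_le d
    _ ≤ coveringNumber ε (range Ψ) := externalCoveringNumber_le_coveringNumber _ _

lemma totallyBounded_of_coveringNumber_le {t : Set GHSpace} {C : ℝ}
    (hdiam : ∀ p ∈ t, diam (univ : Set p.Rep) ≤ C)
    (hcov : ∀ ε : ℝ≥0, 0 < ε → ∃ N : ℕ, ∀ p ∈ t, coveringNumber ε (univ : Set p.Rep) ≤ N) :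
    TotallyBounded t := by
  choose! K hK using fun n : ℕ => hcov ((n : ℝ≥0) + 1)⁻¹ (by positivity)
  refine totallyBounded (u := fun n => 2 * ((n : ℝ) + 1)⁻¹) (K := K) ?_ hdiam fun p hp n => ?_
  · simpa using (tendsto_one_div_add_atTop_nhds_zero_nat).const_mul (2 : ℝ)
  have hfin : coveringNumber ((n : ℝ≥0) + 1)⁻¹ (univ : Set p.Rep) ≠ ⊤ :=
    ne_top_of_le_ne_top (ENat.natCast_ne_top _) (hK n p hp)
  refine ⟨minimalCover ((n : ℝ≥0) + 1)⁻¹ univ, ?_, ?_⟩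
  · have h := (encard_minimalCover hfin).trans_le (hK n p hp)
    rwa [Set.encard, ENat.card, Cardinal.toENat_le_natCast] at h
  · refine (isCover_iff_subset_iUnion_closedBall.1 (isCover_minimalCover hfin)).trans ?_
    gcongr with y
    refine closedBall_subset_ball ?_
    push_cast
    linarith [show (0 : ℝ) < ((n : ℝ) + 1)⁻¹ by positivity]

lemma exists_subseq_tendsto_of_coveringNumber_le (p : ℕ → GHSpace) {C : ℝ}
    (hdiam : ∀ j, diam (univ : Set (p j).Rep) ≤ C)
    (hcov : ∀ ε : ℝ≥0, 0 < ε → ∃ N : ℕ, ∀ j, coveringNumber ε (univ : Set (p j).Rep) ≤ N) :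
    ∃ φ : ℕ → ℕ, StrictMono φ ∧ ∃ K : GHSpace, Tendsto (p ∘ φ) atTop (𝓝 K) := by
  have htb : TotallyBounded (range p) :=
    totallyBounded_of_coveringNumber_le (by rintro _ ⟨j, rfl⟩; exact hdiam j) fun ε hε =>
      (hcov ε hε).imp fun N hN => by rintro _ ⟨j, rfl⟩; exact hN j
  obtain ⟨K, -, φ, hφ, hK⟩ := (htb.closure.isCompact_of_isClosed isClosed_closure).tendsto_subseq
    fun j => subset_closure (mem_range_self j)
  exact ⟨φ, hφ, K, hK⟩

end GromovHausdorff

section setGH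

variable {Z : Type u} [MetricSpace Z] {S : Set Z} (hc : IsCompact S) (hn : S.Nonempty)

lemma exists_isometry_range_eq_of_setGH :
    ∃ f : (setGH S hc hn).Rep → Z, Isometry f ∧ range f = S := by
  have := isCompact_iff_compactSpace.mp hc
  have := hn.to_subtype
  obtain ⟨e⟩ := (toGHSpace_eq_toGHSpace_iff_isometryEquiv (X := (setGH S hc hn).Rep)
    (Y := S)).1 (GHSpace.toGHSpace_rep _)
  exact ⟨(↑) ∘ e, isometry_subtype_coe.comp e.isometry, by
    rw [range_comp, e.surjective.range_eq, image_univ, Subtype.range_coe]⟩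

lemma diam_univ_setGH_rep : diam (univ : Set (setGH S hc hn).Rep) = diam S := by
  obtain ⟨f, hf, hrange⟩ := exists_isometry_range_eq_of_setGH hc hn
  rw [← hf.diam_range, hrange]

lemma coveringNumber_univ_setGH_rep (ε : ℝ≥0) :
    coveringNumber ε (univ : Set (setGH S hc hn).Rep) = coveringNumber ε S := by
  obtain ⟨f, hf, hrange⟩ := exists_isometry_range_eq_of_setGH hc hn
  rw [← hf.coveringNumber_image, image_univ, hrange]

end setGH

namespace IsLengthSpace

variable {Y : Type*} [MetricSpace Y] {f : Y → ℝ} {a b : ℝ}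

/-- An approximate midpoint `z` of `x` and `y` is within `3/4 * dist x y` of both, and `f` crosses
`(a, b]` on one of the two halves unless `f z` already lies in it. -/
lemma exists_btwn_of_dist_le (hY : IsLengthSpace Y) (hf : LipschitzWith 1 f) (hab : a < b)
    (n : ℕ) {x y : Y} (hxy : dist x y ≤ (b - a) * (4 / 3) ^ n) (hx : b < f x) (hy : f y ≤ a) :
    ∃ z, a < f z ∧ f z ≤ b := by
  induction n generalizing x y with
  | zero =>
    have := hf.le_add_mul x y
    simp only [pow_zero, mul_one, NNReal.coe_one, one_mul] at hxy this
    linarith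
  | succ n ih =>
    have hxy0 : 0 < dist x y := dist_pos.2 (by rintro rfl; linarith)
    obtain ⟨z, hxz, hzy⟩ := hY x y (dist x y / 4) (by positivity)
    have hshrink : dist x y / 2 + dist x y / 4 ≤ (b - a) * (4 / 3) ^ n := by
      rw [pow_succ] at hxy; linarith
    rcases le_or_gt (f z) a with hza | hza
    · exact ih (hxz.trans hshrink) hx hza
    rcases le_or_gt (f z) b with hzb | hzb
    · exact ⟨z, hza, hzb⟩
    · exact ih (hzy.trans hshrink) hzb hy

lemma exists_btwn (hY : IsLengthSpace Y) (hf : LipschitzWith 1 f) (hab : a < b) {x y : Y}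
    (hx : b < f x) (hy : f y ≤ a) : ∃ z, a < f z ∧ f z ≤ b := by
  obtain ⟨n, hn⟩ := pow_unbounded_of_one_lt (dist x y / (b - a)) (by norm_num : (1 : ℝ) < 4 / 3)
  refine exists_btwn_of_dist_le hY hf hab n ?_ hx hy
  rw [div_lt_iff₀ (sub_pos.2 hab)] at hn
  linarith

end IsLengthSpace

section Completion

variable {Y : Type u} [MetricSpace Y] {a b : ℝ}

lemma univ_subset_innerRegion_union_thickening (hbne : (mBoundary Y).Nonempty) (ha : 0 ≤ a)
    (hab : a < b) :
    (univ : Set (Completion Y)) ⊆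
      (((↑) : Y → Completion Y) '' innerRegion Y a) ∪ thickening b (mBoundary Y) := by
  rintro z -
  by_cases hz : z ∈ mBoundary Y
  · exact Or.inr (self_subset_thickening (ha.trans_lt hab) _ hz)
  obtain ⟨x, rfl⟩ : z ∈ range ((↑) : Y → Completion Y) := not_not.1 hz
  by_cases hx : x ∈ innerRegion Y a
  · exact Or.inl (mem_image_of_mem _ hx)
  · refine Or.inr ((mem_thickening_iff_infDist_lt hbne).2 ?_)
    exact (not_lt.1 hx).trans_lt hab

lemma exists_mem_innerRegion_infDist_le (hY : IsLengthSpace Y) (hbne : (mBoundary Y).Nonempty)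
    (ha : 0 < a) (hab : a < b) (hb : (innerRegion Y b).Nonempty) :
    ∃ x ∈ innerRegion Y a, infDist (x : Completion Y) (mBoundary Y) ≤ b := by
  obtain ⟨x, hx⟩ := hb
  obtain ⟨z, hz⟩ := hbne
  obtain ⟨_, ⟨y, rfl⟩, hzy⟩ :=
    Metric.mem_closure_iff.1 (UniformSpace.Completion.denseRange_coe z) a ha
  have hy : infDist (y : Completion Y) (mBoundary Y) ≤ a :=
    (infDist_le_dist_of_mem hz).trans (by rw [dist_comm]; exact hzy.le)
  have hf : LipschitzWith 1 fun x : Y => infDist (x : Completion Y) (mBoundary Y) := by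
    refine LipschitzWith.of_le_add fun u v => ?_
    rw [← UniformSpace.Completion.dist_eq]
    exact infDist_le_infDist_add_dist
  exact hY.exists_btwn hf hab hx hy

lemma diam_completion_le [CompactSpace (Completion Y)] (hY : IsLengthSpace Y)
    (hbne : (mBoundary Y).Nonempty) (ha : 0 < a) (hab : a < b)
    (hb : (innerRegion Y b).Nonempty) :
    diam (univ : Set (Completion Y)) ≤
      diam (closure (((↑) : Y → Completion Y) '' innerRegion Y a)) +
        diam (closure (mBoundary Y)) + 3 * b := by
  obtain ⟨x, hx, hxb⟩ := exists_mem_innerRegion_infDist_le hY hbne ha hab hb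
  obtain ⟨w, hw, hxw⟩ :=
    isClosed_closure.isCompact.exists_infDist_eq_dist hbne.closure (x : Completion Y)
  rw [infDist_closure] at hxw
  have hcover := (univ_subset_innerRegion_union_thickening hbne ha.le hab).trans
    (union_subset_union subset_closure (thickening_subset_of_subset b subset_closure))
  have hdiam := diam_le_of_subset_union_thickening isClosed_closure.isCompact.isBounded
    isClosed_closure.isCompact.isBounded (subset_closure (mem_image_of_mem _ hx)) hw
    (ha.trans hab).le hcover
  linarith

lemma coveringNumber_completion_le (hbne : (mBoundary Y).Nonempty) {d ε : ℝ≥0} (ha : 0 ≤ a)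
    (had : a < d) :
    coveringNumber (2 * (d + ε)) (univ : Set (Completion Y)) ≤
      coveringNumber ε (closure (((↑) : Y → Completion Y) '' innerRegion Y a)) +
        coveringNumber ε (closure (mBoundary Y)) := by
  have hcover := (univ_subset_innerRegion_union_thickening hbne ha had).trans
    (union_subset_union subset_closure (thickening_subset_of_subset d subset_closure))
  calc coveringNumber (2 * (d + ε)) (univ : Set (Completion Y))
      ≤ externalCoveringNumber (d + ε) (univ : Set (Completion Y)) :=
        coveringNumber_two_mul_le_externalCoveringNumber _ _
    _ ≤ externalCoveringNumber (d + ε) (closure (((↑) : Y → Completion Y) '' innerRegion Y a)) +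
          externalCoveringNumber (d + ε) (thickening d (closure (mBoundary Y))) :=
        (externalCoveringNumber_mono_set hcover).trans externalCoveringNumber_union_le
    _ ≤ externalCoveringNumber ε (closure (((↑) : Y → Completion Y) '' innerRegion Y a)) +
          externalCoveringNumber ε (closure (mBoundary Y)) :=
        add_le_add (externalCoveringNumber_anti le_add_self)
          (externalCoveringNumber_thickening_le d)
    _ ≤ _ := add_le_add (externalCoveringNumber_le_coveringNumber _ _)
          (externalCoveringNumber_le_coveringNumber _ _)

lemma diam_completion_le_of_dist_lt [CompactSpace (Completion Y)] (hY : IsLengthSpace Y)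
    (hbne : (mBoundary Y).Nonempty) (ha : 0 < a) (hab : a < b)
    (hb : (innerRegion Y b).Nonempty) {L Lb : GHSpace} {r rb : ℝ}
    {hn : (closure (((↑) : Y → Completion Y) '' innerRegion Y a)).Nonempty}
    (hL : dist (setGH _ isClosed_closure.isCompact hn) L < r)
    (hLb : dist (setGH _ isClosed_closure.isCompact hbne.closure) Lb < rb) :
    diam (univ : Set (Completion Y)) ≤
      diam (univ : Set L.Rep) + diam (univ : Set Lb.Rep) + 2 * (r + rb) + 3 * b := by
  have hI := diam_rep_le _ _ hL
  have hB := diam_rep_le _ _ hLb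
  rw [diam_univ_setGH_rep] at hI hB
  linarith [diam_completion_le hY hbne ha hab hb]

lemma coveringNumber_completion_le_of_dist_lt [CompactSpace (Completion Y)]
    (hbne : (mBoundary Y).Nonempty) {L Lb : GHSpace} {d η ε : ℝ≥0} (ha : 0 ≤ a) (had : a < d)
    {hn : (closure (((↑) : Y → Completion Y) '' innerRegion Y a)).Nonempty}
    (hL : dist (setGH _ isClosed_closure.isCompact hn) L < η)
    (hLb : dist (setGH _ isClosed_closure.isCompact hbne.closure) Lb < η) :
    coveringNumber (2 * (d + 2 * (η + ε))) (univ : Set (Completion Y)) ≤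
      coveringNumber ε (univ : Set L.Rep) + coveringNumber ε (univ : Set Lb.Rep) := by
  refine (coveringNumber_completion_le hbne ha had).trans (add_le_add ?_ ?_)
  · rw [← coveringNumber_univ_setGH_rep isClosed_closure.isCompact hn]
    exact coveringNumber_rep_le _ _ hL ε
  · rw [← coveringNumber_univ_setGH_rep isClosed_closure.isCompact hbne.closure]
    exact coveringNumber_rep_le _ _ hLb ε

end Completion

theorem stmt2_general {X : ℕ → Type u} [∀ j, MetricSpace (X j)]
    -- the X_j are precompact: their completions are compact
    [hcc : ∀ j, CompactSpace (Completion (X j))]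
    -- the X_j are length spaces
    (hlen : ∀ j, IsLengthSpace (X j))
    -- the boundaries are nonempty and precompact
    (hbne : ∀ j, (mBoundary (X j)).Nonempty)
    -- a decreasing sequence δ_i → 0 with nonempty inner regions
    (δ : ℕ → ℝ) (hpos : ∀ i, 0 < δ i)
    (hlim : Tendsto δ atTop (nhds 0))
    (hne : ∀ j i, (innerRegion (X j) (δ i)).Nonempty)
    -- GH convergence of the closed inner regions, for every i
    (L : ℕ → GHSpace)
    (hGHin : ∀ i, Tendsto (fun j => dist
        (setGH (closure (((↑) : X j → Completion (X j)) '' innerRegion (X j) (δ i)))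
          isClosed_closure.isCompact (((hne j i).image _).closure)) (L i))
      atTop (nhds 0))
    -- GH convergence of the boundaries
    (Lb : GHSpace)
    (hGHb : Tendsto (fun j => dist
        (setGH (closure (mBoundary (X j))) isClosed_closure.isCompact (hbne j).closure) Lb)
      atTop (nhds 0)) :
    ∃ φ : ℕ → ℕ, StrictMono φ ∧ ∃ K : GHSpace,
      Tendsto (fun k => dist
        (setGH (Set.univ : Set (Completion (X (φ k)))) isCompact_univ
          ⟨↑(hne (φ k) 0).choose, trivial⟩) K) atTop (nhds 0) := by
  obtain ⟨i₀, hi₀⟩ : ∃ i, δ i < δ 0 := ((tendsto_order.1 hlim).2 _ (hpos 0)).exists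
  obtain ⟨M, hM⟩ := (hGHin i₀).bddAbove_range
  obtain ⟨Mb, hMb⟩ := hGHb.bddAbove_range
  have hdiam (j : ℕ) := diam_completion_le_of_dist_lt (hlen j) (hbne j) (hpos i₀) hi₀ (hne j 0)
    ((hM (mem_range_self j)).trans_lt (lt_add_one M))
    ((hMb (mem_range_self j)).trans_lt (lt_add_one Mb))
  have hcov (ρ : ℝ≥0) (hρ : 0 < ρ) :
      ∃ N : ℕ, ∀ j, coveringNumber ρ (univ : Set (Completion (X j))) ≤ N := by
    set η : ℝ≥0 := ρ / 10
    have hη : 0 < η := by positivity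
    obtain ⟨i, hi⟩ : ∃ i, δ i < η := ((tendsto_order.1 hlim).2 _ hη).exists
    have hfin (q : GHSpace) := isCompact_univ.coveringNumber_ne_top (Z := q.Rep) hη.ne'
    refine ENat.exists_forall_le_of_eventually_le
      (fun j => isCompact_univ.coveringNumber_ne_top hρ.ne')
      (N := (coveringNumber η (univ : Set (L i).Rep)).toNat +
        (coveringNumber η (univ : Set Lb.Rep)).toNat) ?_
    filter_upwards [(tendsto_order.1 (hGHin i)).2 _ hη, (tendsto_order.1 hGHb).2 _ hη]
      with j hj hjb
    have hρη : ρ = 2 * (η + 2 * (η + η)) := by ring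
    rw [hρη, Nat.cast_add, ENat.natCast_toNat (hfin _), ENat.natCast_toNat (hfin _)]
    exact coveringNumber_completion_le_of_dist_lt (hbne j) (hpos i).le hi hj hjb
  obtain ⟨φ, hφ, K, hK⟩ := exists_subseq_tendsto_of_coveringNumber_le
    (fun j => setGH (Set.univ : Set (Completion (X j))) isCompact_univ ⟨↑(hne j 0).choose, trivial⟩)
    (fun j => (diam_univ_setGH_rep _ _).trans_le (hdiam j))
    fun ρ hρ => (hcov ρ hρ).imp fun N hN j => (coveringNumber_univ_setGH_rep _ _ ρ).trans_le (hN j)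
  exact ⟨φ, hφ, K, tendsto_iff_dist_tendsto_zero.1 hK⟩

/-- GH compactness for metric spaces with converging inner regions and boundaries: if the
closed inner regions `cl(X_j^{δ_i})` converge in GH sense for each `i` (to the compact space
represented by `L i`), and the boundaries `∂X_j` converge in GH sense (to `L∂`), then a
subsequence of the completions `X̄_j` converges in GH sense to some compact metric space. -/
theorem stmt2 {X : ℕ → Type u} [∀ j, MetricSpace (X j)]
    -- the X_j are precompact: their completions are compact
    [hcc : ∀ j, CompactSpace (Completion (X j))]
    -- the X_j are length spaces
    (hlen : ∀ j, IsLengthSpace (X j))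
    -- the boundaries are nonempty and precompact
    (hbne : ∀ j, (mBoundary (X j)).Nonempty)
    (hbpre : ∀ j, TotallyBounded (mBoundary (X j)))
    -- a decreasing sequence δ_i → 0 with nonempty inner regions
    (δ : ℕ → ℝ) (hpos : ∀ i, 0 < δ i) (hdec : StrictAnti δ)
    (hlim : Tendsto δ atTop (nhds 0))
    (hne : ∀ j i, (innerRegion (X j) (δ i)).Nonempty)
    -- GH convergence of the closed inner regions, for every i
    (L : ℕ → GHSpace)
    (hGHin : ∀ i, Tendsto (fun j => dist
        (setGH (closure (((↑) : X j → Completion (X j)) '' innerRegion (X j) (δ i)))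
          isClosed_closure.isCompact (((hne j i).image _).closure)) (L i))
      atTop (nhds 0))
    -- GH convergence of the boundaries
    (Lb : GHSpace)
    (hGHb : Tendsto (fun j => dist
        (setGH (closure (mBoundary (X j))) isClosed_closure.isCompact (hbne j).closure) Lb)
      atTop (nhds 0)) :
    ∃ φ : ℕ → ℕ, StrictMono φ ∧ ∃ K : GHSpace,
      Tendsto (fun k => dist
        (setGH (Set.univ : Set (Completion (X (φ k)))) isCompact_univ
          ⟨↑(hne (φ k) 0).choose, trivial⟩) K) atTop (nhds 0) :=
  stmt2_general (hcc := hcc) hlen hbne δ hpos hlim hne L hGHin Lb hGHb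
end
end

section
/- Let (X_j, d_j) be a sequence of precompact length metric spaces with compact boundary ∂X_j = X̄_j \ X_j. Suppose the boundaries (∂X_j, d_j) converge in Gromov–Hausdorff sense to a compact metric space (X_∂, d_∂). Then either (1) there exists δ > 0 such that the inner region X_j^δ is nonempty for infinitely many j, or (2) the completions (X̄_j, d_j) converge in Gromov–Hausdorff sense to (X_∂, d_∂). -/
open Metric Set Filter GromovHausdorff
open UniformSpace (Completion)

noncomputable section

/-!
If no point of `X_j` lies farther than `δ` from `∂X_j`, then by density no point of the completion
does either, so `X̄_j` and `∂X_j` are within Hausdorff distance `δ` inside `X̄_j`, hence within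
GH distance `δ`. If alternative (1) fails, this holds for every `δ > 0` and all large `j`, and the
triangle inequality in GH space transfers the convergence of the boundaries to the completions.
-/

theorem dist_setGH_le_hausdorffDist {Z : Type u} [MetricSpace Z] {S T : Set Z}
    (hS : IsCompact S) (hSne : S.Nonempty) (hT : IsCompact T) (hTne : T.Nonempty) :
    dist (setGH S hS hSne) (setGH T hT hTne) ≤ hausdorffDist S T := by
  have := isCompact_iff_compactSpace.mp hS
  have := isCompact_iff_compactSpace.mp hT
  have := hSne.to_subtype
  have := hTne.to_subtype
  have h := ghDist_le_hausdorffDist (isometry_subtype_coe (s := S)) (isometry_subtype_coe (s := T))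
  rw [Subtype.range_coe, Subtype.range_coe] at h
  simpa only [ghDist, setGH] using h

theorem infDist_mBoundary_le_of_innerRegion_eq_empty {X : Type u} [MetricSpace X] {δ : ℝ}
    (h : innerRegion X δ = ∅) (z : Completion X) : infDist z (mBoundary X) ≤ δ := by
  refine Completion.induction_on z
    (isClosed_le (continuous_infDist_pt _) continuous_const) fun x => ?_
  by_contra! hx
  exact (eq_empty_iff_forall_notMem.mp h) x hx

theorem dist_setGH_univ_mBoundary_le {X : Type u} [MetricSpace X] [Nonempty X]
    [CompactSpace (Completion X)] (hb : IsCompact (mBoundary X)) (hbne : (mBoundary X).Nonempty)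
    {δ : ℝ} (hδ : 0 ≤ δ) (h : innerRegion X δ = ∅) :
    dist (setGH (univ : Set (Completion X)) isCompact_univ
        ⟨↑(Classical.arbitrary X), trivial⟩) (setGH (mBoundary X) hb hbne) ≤ δ := by
  refine (dist_setGH_le_hausdorffDist _ _ _ _).trans (hausdorffDist_le_of_infDist hδ ?_ ?_)
  · exact fun z _ => infDist_mBoundary_le_of_innerRegion_eq_empty h z
  · intro z _
    rw [infDist_zero_of_mem (mem_univ z)]
    exact hδ

theorem stmt3_general {X : ℕ → Type u} [∀ j, MetricSpace (X j)] [∀ j, Nonempty (X j)]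
    -- the X_j are precompact: their completions are compact
    [hcc : ∀ j, CompactSpace (Completion (X j))]
    -- the boundaries are nonempty and compact
    (hbcpt : ∀ j, IsCompact (mBoundary (X j))) (hbne : ∀ j, (mBoundary (X j)).Nonempty)
    -- GH convergence of the boundaries
    (Lb : GHSpace)
    (hGHb : Tendsto (fun j => dist (setGH (mBoundary (X j)) (hbcpt j) (hbne j)) Lb)
      atTop (nhds 0)) :
    (∃ δ > (0 : ℝ), {j : ℕ | (innerRegion (X j) δ).Nonempty}.Infinite) ∨
      Tendsto (fun j => dist
        (setGH (Set.univ : Set (Completion (X j))) isCompact_univ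
          ⟨↑(Classical.arbitrary (X j)), trivial⟩) Lb) atTop (nhds 0) := by
  refine or_iff_not_imp_left.mpr fun hcollapse => ?_
  push Not at hcollapse
  refine Metric.tendsto_nhds.mpr fun ε hε => ?_
  have hinner : ∀ᶠ j in atTop, innerRegion (X j) (ε / 2) = ∅ := by
    simpa only [Nat.cofinite_eq_atTop, mem_ofPred_eq, not_nonempty_iff_eq_empty] using
      (hcollapse (ε / 2) (half_pos hε)).eventually_cofinite_notMem
  filter_upwards [hinner, Metric.tendsto_nhds.mp hGHb (ε / 2) (half_pos hε)] with j hj hbdry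
  rw [Real.dist_0_eq_abs, abs_of_nonneg dist_nonneg] at hbdry ⊢
  calc _ ≤ _ + dist (setGH (mBoundary (X j)) (hbcpt j) (hbne j)) Lb := dist_triangle _ _ _
    _ < ε / 2 + ε / 2 :=
        add_lt_add_of_le_of_lt (dist_setGH_univ_mBoundary_le _ _ (half_pos hε).le hj) hbdry
    _ = ε := add_halves ε

/-- Collapsing to the boundary or not: if the compact boundaries `∂X_j` of precompact length
spaces `X_j` converge in GH sense to a compact metric space (represented by `Lb`), then either
some inner region `X_j^δ` is nonempty for infinitely many `j`, or the completions `X̄_j`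
converge in GH sense to the same limit. -/
theorem stmt3 {X : ℕ → Type u} [∀ j, MetricSpace (X j)] [∀ j, Nonempty (X j)]
    -- the X_j are precompact: their completions are compact
    [hcc : ∀ j, CompactSpace (Completion (X j))]
    -- the X_j are length spaces
    (hlen : ∀ j, IsLengthSpace (X j))
    -- the boundaries are nonempty and compact
    (hbcpt : ∀ j, IsCompact (mBoundary (X j))) (hbne : ∀ j, (mBoundary (X j)).Nonempty)
    -- GH convergence of the boundaries
    (Lb : GHSpace)
    (hGHb : Tendsto (fun j => dist (setGH (mBoundary (X j)) (hbcpt j) (hbne j)) Lb)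
      atTop (nhds 0)) :
    (∃ δ > (0 : ℝ), {j : ℕ | (innerRegion (X j) δ).Nonempty}.Infinite) ∨
      Tendsto (fun j => dist
        (setGH (Set.univ : Set (Completion (X j))) isCompact_univ
          ⟨↑(Classical.arbitrary (X j)), trivial⟩) Lb) atTop (nhds 0) :=
  stmt3_general (hcc := hcc) hbcpt hbne Lb hGHb
end
end
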